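/- Let a flow on a finite DAG satisfy flow matching with all rewards concentrated on terminal states. Then the total flow out of the initial state s_0 equals the sum of terminal rewards: F(s_0) = ∑_{s_f terminal} R(s_f), and consequently the probability that a trajectory sampled from the forward policy terminates at s_f is R(s_f) / ∑_{s_f'} R(s_f'). -/
import Mathlib


open Finset

/-- GFlowNets sample terminal states proportionally to the reward: if the edge flow on a
finite DAG satisfies conservation at internal states and the inflow of each terminal
state `s_f` equals `R(s_f)`, then the outflow of the initial state equals `∑ R(s_f)`,
and the probability of terminating at `s_f` (terminating inflow over initial flow) is
`R(s_f) / ∑ R(s_f')`. -/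
theorem flow_samples_proportional_to_reward
    {V : Type*} [Fintype V]
    (edge : V → V → Prop)
    (ord : V → ℕ) (hacyclic : ∀ v w, edge v w → ord v < ord w)
    (F : V → V → ℝ) (hF_nonneg : ∀ v w, 0 ≤ F v w)
    (hF_supp : ∀ v w, ¬ edge v w → F v w = 0)
    (s0 : V) (term : V → Prop) [DecidablePred term]
    (hs0_not_term : ¬ term s0)
    -- unique initial state: no inflow into s0
    (h_no_inflow : ∀ v, F v s0 = 0)
    -- terminal states have no outflow
    (h_term_out : ∀ v, term v → ∀ u, F v u = 0)
    (R : V → ℝ) (hR_nonneg : ∀ v, 0 ≤ R v)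
    -- boundary condition: inflow of each terminal state equals its reward
    (h_term_in : ∀ v, term v → ∑ u : V, F u v = R v)
    -- conservation at internal states
    (h_cons : ∀ v, v ≠ s0 → ¬ term v → ∑ u : V, F u v = ∑ w : V, F v w)
    (hR_pos : 0 < ∑ v ∈ univ.filter term, R v) :
    (∑ w : V, F s0 w = ∑ v ∈ univ.filter term, R v) ∧
      ∀ v, term v →
        (∑ u : V, F u v) / (∑ w : V, F s0 w) = R v / ∑ v' ∈ univ.filter term, R v' := by
  classical
  have key : ∑ v : V, ((∑ u : V, F u v) - (∑ w : V, F v w)) = 0 := by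
    classical
    rw [Finset.sum_sub_distrib, Finset.sum_comm]
    ring
  have hmain : ∑ w : V, F s0 w = ∑ v ∈ univ.filter term, R v := by
    have h1 : ∑ v ∈ univ.filter term, ((∑ u : V, F u v) - (∑ w : V, F v w))
        = ∑ v ∈ univ.filter term, R v := by
      apply Finset.sum_congr rfl
      intro v hv
      simp only [Finset.mem_filter] at hv
      rw [h_term_in v hv.2]
      have : ∑ w : V, F v w = 0 := by
        apply Finset.sum_eq_zero; intro w _; exact h_term_out v hv.2 w
      rw [this]; ring
    have h2 : ∑ v ∈ univ.filter (fun v => ¬ term v), ((∑ u : V, F u v) - (∑ w : V, F v w))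
        = -(∑ w : V, F s0 w) := by
      rw [Finset.sum_eq_single_of_mem s0]
      · have : ∑ u : V, F u s0 = 0 := by
          apply Finset.sum_eq_zero; intro u _; exact h_no_inflow u
        rw [this]; ring
      · simp [hs0_not_term]
      · intro v hv hne
        simp only [Finset.mem_filter] at hv
        rw [h_cons v hne hv.2]; ring
    have h3 := Finset.sum_filter_add_sum_filter_not univ term
      (fun v => (∑ u : V, F u v) - (∑ w : V, F v w))
    rw [h1, h2, key] at h3
    linarith
  refine ⟨hmain, fun v hv => ?_⟩
  rw [hmain, h_term_in v hv]
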